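/- Norm-like lower bound for the relative entropy (Lemma A.2): Let hypotheses (H1), (H2), (H3) and the growth assumptions (A1), (A2), (A3) be satisfied. Then one may select R > M + 1 and constants c₁, c₂ > 0 depending on M such that η(u|ū) ≥ c₁ |u − ū|² whenever |u| ≤ R and |ū| ≤ M, and η(u|ū) ≥ c₂ |u − ū|^p whenever |u| ≥ R and |ū| ≤ M. -/

import Mathlib

/-!
Put `H = η ∘ A⁻¹`. By (H2), `∇H = G ∘ A⁻¹`, and (H3) says exactly that `⟪∇G ξ, ∇A ξ⟫ > 0`, i.e.
that `∇H` is strictly monotone; hence `η(u|v) = H(A u) - H(A v) - ⟪∇H(A v), A u - A v⟫ > 0` for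
`u ≠ v`. Near the diagonal, the Hessian of `u ↦ η(u|v)` is uniformly positive by compactness,
and Taylor's formula gives the quadratic bound; on the rest of `{|u| ≤ R, |v| ≤ M}` it follows
from positivity and compactness. For large `|u|`, (A3) makes `⟪G v, A u⟫` at most `η u / 2`,
and the growth (A1) of `η` gives the `|u|^p` bound.
-/

open scoped RealInnerProductSpace
open Set Function

theorem lt_sub_of_hasDerivAt_of_deriv_pos {φ ψ ψ' : ℝ → ℝ} (hφ : ∀ t, HasDerivAt φ (ψ t) t)
    (hψ : ∀ t, HasDerivAt ψ (ψ' t) t) (hpos : ∀ t, 0 < ψ' t) : ψ 0 < φ 1 - φ 0 := by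
  have hderiv : deriv φ = ψ := funext fun t => (hφ t).deriv
  have hconvex : StrictConvexOn ℝ univ φ :=
    StrictMonoOn.strictConvexOn_of_deriv convex_univ
      (fun t _ => (hφ t).continuousAt.continuousWithinAt)
      (hderiv ▸ (strictMono_of_hasDerivAt_pos hψ hpos).strictMonoOn _)
  simpa [hderiv, slope_def_field] using
    hconvex.deriv_lt_slope (mem_univ 0) (mem_univ 1) one_pos (hφ 0).differentiableAt

theorem add_half_le_sub_of_le_deriv {φ ψ ψ' : ℝ → ℝ} {C : ℝ} (hφ : ∀ t, HasDerivAt φ (ψ t) t)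
    (hψ : ∀ t, HasDerivAt ψ (ψ' t) t) (hC : ∀ t ∈ Icc (0 : ℝ) 1, C ≤ ψ' t) :
    ψ 0 + C / 2 ≤ φ 1 - φ 0 := by
  have hmono : ∀ {f f' : ℝ → ℝ}, (∀ t, HasDerivAt f (f' t) t) → (∀ t ∈ Ioo (0 : ℝ) 1, 0 ≤ f' t) →
      MonotoneOn f (Icc 0 1) := fun hf hf' =>
    monotoneOn_of_deriv_nonneg (convex_Icc 0 1)
      (fun t _ => (hf t).continuousAt.continuousWithinAt)
      (fun t _ => (hf t).differentiableAt.differentiableWithinAt)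
      (fun t ht => by rw [interior_Icc] at ht; rw [(hf t).deriv]; exact hf' t ht)
  -- `ψ t - C t` increases, so `φ t - ψ 0 t - C t² / 2` increases as well
  have hψ_lower : MonotoneOn (fun t => ψ t - C * t) (Icc 0 1) :=
    hmono (fun t => ((hψ t).sub ((hasDerivAt_id' t).const_mul C)).congr_deriv (by ring))
      fun t ht => sub_nonneg.2 (hC t (Ioo_subset_Icc_self ht))
  have key := hmono (f := fun t => φ t - ψ 0 * t - C / 2 * t ^ 2) (f' := fun t => ψ t - ψ 0 - C * t)
    (fun t => (((hφ t).sub ((hasDerivAt_id' t).const_mul (ψ 0))).sub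
      ((hasDerivAt_pow 2 t).const_mul (C / 2))).congr_deriv (by ring))
    (fun t ht => by
      have := hψ_lower (left_mem_Icc.2 zero_le_one) (Ioo_subset_Icc_self ht) ht.1.le
      simp only at this; linarith)
    (left_mem_Icc.2 zero_le_one) (right_mem_Icc.2 zero_le_one) zero_le_one
  simp only at key
  linarith

theorem IsCompact.exists_pos_le_of_dist_le {X : Type*} [PseudoMetricSpace X] {f : X → ℝ}
    {K : Set X} (hK : IsCompact K) (hf : Continuous f) (hpos : ∀ x ∈ K, 0 < f x) :
    ∃ δ > 0, ∃ c > 0, ∀ x ∈ K, ∀ y, dist y x ≤ δ → c ≤ f y := by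
  obtain ⟨c, hc, hcK⟩ := hK.exists_forall_le' hf.continuousOn hpos
  obtain ⟨δ, hδ, hsub⟩ := hK.exists_cthickening_subset_open (isOpen_lt continuous_const hf)
    fun x hx => (half_lt_self hc).trans_le (hcK x hx)
  exact ⟨δ, hδ, c / 2, half_pos hc, fun x hx y hy =>
    (hsub (Metric.mem_cthickening_of_dist_le y x δ K hx hy)).le⟩

theorem exists_mul_sq_le_of_le_norm_sub {E : Type*} [NormedAddCommGroup E] [ProperSpace E]
    {f : E → E → ℝ} (hf : Continuous (uncurry f)) (hpos : ∀ u v, u ≠ v → 0 < f u v) (R M : ℝ)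
    {δ : ℝ} (hδ : 0 < δ) :
    ∃ c > 0, ∀ u v, ‖u‖ ≤ R → ‖v‖ ≤ M → δ ≤ ‖u - v‖ → c * ‖u - v‖ ^ 2 ≤ f u v := by
  set S := (Metric.closedBall (0 : E) R ×ˢ Metric.closedBall (0 : E) M) ∩ {x | δ ≤ ‖x.1 - x.2‖}
  have hS : IsCompact S := ((isCompact_closedBall _ _).prod (isCompact_closedBall _ _)).inter_right
    (isClosed_le continuous_const (by fun_prop))
  have hne : ∀ x ∈ S, ‖x.1 - x.2‖ ≠ 0 := fun x hx => (hδ.trans_le hx.2).ne'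
  obtain ⟨c, hc, hcS⟩ := hS.exists_forall_le' (f := fun x => f x.1 x.2 / ‖x.1 - x.2‖ ^ 2)
    (hf.continuousOn.div (by fun_prop) fun x hx => pow_ne_zero 2 (hne x hx))
    fun x hx => div_pos (hpos _ _ (sub_ne_zero.1 (norm_ne_zero_iff.1 (hne x hx))))
      (pow_pos ((norm_nonneg _).lt_of_ne' (hne x hx)) 2)
  refine ⟨c, hc, fun u v hu hv huv => ?_⟩
  have h := hcS (u, v)
    ⟨⟨mem_closedBall_zero_iff.2 hu, mem_closedBall_zero_iff.2 hv⟩, huv⟩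
  rwa [le_div_iff₀ (pow_pos (hδ.trans_le huv) 2)] at h

theorem Continuous.exists_pos_bound_closedBall {E X : Type*} [NormedAddCommGroup E] [ProperSpace E]
    [SeminormedAddGroup X] {f : E → X} (hf : Continuous f) (M : ℝ) :
    ∃ C > 0, ∀ v, ‖v‖ ≤ M → ‖f v‖ ≤ C := by
  obtain ⟨C, hC, h⟩ := ((isCompact_closedBall (0 : E) M).image hf).isBounded.exists_pos_norm_le
  exact ⟨C, hC, fun v hv => h _ ⟨v, mem_closedBall_zero_iff.2 hv, rfl⟩⟩

variable {E F : Type*} [NormedAddCommGroup F] [InnerProductSpace ℝ F]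

/-- The relative entropy `η(u|v)`. -/
noncomputable def relEntropy (η : E → ℝ) (A G : E → F) (u v : E) : ℝ :=
  η u - η v - ⟪G v, A u - A v⟫

theorem half_sub_le_relEntropy {η : E → ℝ} {A G : E → F} {u v : E} {Cg Ca Ce : ℝ}
    (hGv : ‖G v‖ ≤ Cg) (hAv : ‖A v‖ ≤ Ca) (hηv : |η v| ≤ Ce) (hAu : Cg * ‖A u‖ ≤ η u / 2) :
    η u / 2 - (Ce + Cg * Ca) ≤ relEntropy η A G u v := by
  have hinner : ⟪G v, A u - A v⟫ ≤ Cg * (‖A u‖ + Ca) :=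
    (real_inner_le_norm _ _).trans <| mul_le_mul hGv ((norm_sub_le _ _).trans (by linarith))
      (norm_nonneg _) ((norm_nonneg _).trans hGv)
  rw [relEntropy]
  linarith [(abs_le.1 hηv).2]

variable [NormedAddCommGroup E]

theorem exists_mul_rpow_le_relEntropy [ProperSpace E] {η : E → ℝ} {A G : E → F}
    (hη : Continuous η) (hA : Continuous A) (hG : Continuous G) {p β B : ℝ} (hp : 1 ≤ p)
    (hβ : 0 < β) (hgrowth : ∀ w, β * (‖w‖ ^ p + 1) - B ≤ η w)
    (hA3 : ∀ ε > (0 : ℝ), ∃ R₀, ∀ w, R₀ ≤ ‖w‖ → ‖A w‖ ≤ ε * η w) (M : ℝ) :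
    ∃ R₀, ∃ c > 0, ∀ u v, ‖v‖ ≤ M → R₀ ≤ ‖u‖ → c * ‖u - v‖ ^ p ≤ relEntropy η A G u v := by
  obtain ⟨Cg, hCg, hGM⟩ := hG.exists_pos_bound_closedBall M
  obtain ⟨Ca, -, hAM⟩ := hA.exists_pos_bound_closedBall M
  obtain ⟨Ce, -, hηM⟩ := hη.exists_pos_bound_closedBall M
  obtain ⟨R₀, hR₀⟩ := hA3 (1 / (2 * Cg)) (by positivity)
  set K := B / 2 + Ce + Cg * Ca with hK
  refine ⟨max (max R₀ M) (max 1 (4 * K / β)), β / (4 * 2 ^ p), by positivity, fun u v hv hu => ?_⟩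
  obtain ⟨⟨hR₀u, hMu⟩, h1u, hKu⟩ := by simpa only [max_le_iff] using hu
  have hAu : Cg * ‖A u‖ ≤ η u / 2 :=
    calc Cg * ‖A u‖ ≤ Cg * (1 / (2 * Cg) * η u) := by gcongr; exact hR₀ u hR₀u
      _ = η u / 2 := by field_simp
  have hKp : 4 * K ≤ β * ‖u‖ ^ p := by
    have h := hKu.trans (Real.self_le_rpow_of_one_le h1u hp)
    rwa [div_le_iff₀' hβ] at h
  have hsub : ‖u - v‖ ^ p ≤ 2 ^ p * ‖u‖ ^ p := by
    rw [← Real.mul_rpow zero_le_two (norm_nonneg u)]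
    exact Real.rpow_le_rpow (norm_nonneg _) ((norm_sub_le u v).trans (by linarith))
      (by linarith)
  calc β / (4 * 2 ^ p) * ‖u - v‖ ^ p ≤ β / (4 * 2 ^ p) * (2 ^ p * ‖u‖ ^ p) := by gcongr
    _ = β / 4 * ‖u‖ ^ p := by field_simp
    _ ≤ η u / 2 - (Ce + Cg * Ca) := by nlinarith [hgrowth u, hK]
    _ ≤ relEntropy η A G u v :=
      half_sub_le_relEntropy (hGM v hv) (hAM v hv) (by simpa using hηM v hv) hAu

variable [NormedSpace ℝ E]

section Lines

variable {X : Type*} [NormedAddCommGroup X] [NormedSpace ℝ X] {f : E → X} {v ξ : E} {t : ℝ}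

theorem hasDerivAt_add_smul (v ξ : X) (t : ℝ) : HasDerivAt (fun s : ℝ => v + s • ξ) ξ t :=
  (((hasDerivAt_id' t).smul_const ξ).const_add v).congr_deriv (one_smul ℝ ξ)

theorem hasDerivAt_comp_add_smul (hf : DifferentiableAt ℝ f (v + t • ξ)) :
    HasDerivAt (fun s : ℝ => f (v + s • ξ)) (fderiv ℝ f (v + t • ξ) ξ) t :=
  hf.hasFDerivAt.comp_hasDerivAt t (hasDerivAt_add_smul v ξ t)

theorem ContDiff.continuous_fderiv_fderiv (hf : ContDiff ℝ 2 f) :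
    Continuous (fderiv ℝ (fderiv ℝ f)) :=
  (hf.fderiv_right (m := 1) le_rfl).continuous_fderiv one_ne_zero

theorem hasDerivAt_fderiv_comp_add_smul (hf : ContDiff ℝ 2 f) (ζ : E) :
    HasDerivAt (fun s : ℝ => fderiv ℝ f (v + s • ξ) ζ)
      (fderiv ℝ (fderiv ℝ f) (v + t • ξ) ξ ζ) t := by
  have hf' : Differentiable ℝ (fderiv ℝ f) :=
    (hf.fderiv_right (m := 1) le_rfl).differentiable one_ne_zero
  simpa using (hasDerivAt_comp_add_smul (hf' _)).clm_apply (hasDerivAt_const t ζ)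

end Lines

/-- The second derivative of `u ↦ relEntropy η A G u v` at `w`, in direction `ξ`. -/
noncomputable def relEntropyHessian (η : E → ℝ) (A G : E → F) (w v ξ : E) : ℝ :=
  fderiv ℝ (fderiv ℝ η) w ξ ξ - ⟪G v, fderiv ℝ (fderiv ℝ A) w ξ ξ⟫

section Entropy

variable {η : E → ℝ} {A G : E → F}

theorem relEntropyHessian_smul (w v ξ : E) (s : ℝ) :
    relEntropyHessian η A G w v (s • ξ) = s ^ 2 * relEntropyHessian η A G w v ξ := by
  simp only [relEntropyHessian, map_smul, FunLike.coe_smul, Pi.smul_apply, smul_eq_mul,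
    real_inner_smul_right]
  ring

theorem relEntropyHessian_self_eq_iteratedFDeriv (w ξ : E) :
    relEntropyHessian η A G w w ξ =
      iteratedFDeriv ℝ 2 η w ![ξ, ξ] - ⟪G w, iteratedFDeriv ℝ 2 A w ![ξ, ξ]⟫ := by
  simp [relEntropyHessian, iteratedFDeriv_two_apply]

theorem continuous_relEntropyHessian (hη : ContDiff ℝ 2 η) (hA : ContDiff ℝ 2 A)
    (hG : Continuous G) :
    Continuous fun x : E × E × E => relEntropyHessian η A G x.1 x.2.1 x.2.2 := by
  have hη₂ := hη.continuous_fderiv_fderiv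
  have hA₂ := hA.continuous_fderiv_fderiv
  unfold relEntropyHessian
  fun_prop

theorem relEntropyHessian_self_eq_inner (hη : ContDiff ℝ 2 η) (hA : ContDiff ℝ 2 A)
    (hG : Differentiable ℝ G) (hH2 : ∀ w ξ, fderiv ℝ η w ξ = ⟪G w, fderiv ℝ A w ξ⟫) (w ξ : E) :
    relEntropyHessian η A G w w ξ = ⟪fderiv ℝ G w ξ, fderiv ℝ A w ξ⟫ := by
  have hlhs := hasDerivAt_fderiv_comp_add_smul (v := w) (ξ := ξ) (t := 0) hη ξ
  simp_rw [hH2] at hlhs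
  have hrhs := (hasDerivAt_comp_add_smul (v := w) (ξ := ξ) (t := 0) (hG _)).inner ℝ
    (hasDerivAt_fderiv_comp_add_smul (v := w) (ξ := ξ) (t := 0) hA ξ)
  simp only [zero_smul, add_zero] at hlhs hrhs
  rw [relEntropyHessian, hlhs.unique hrhs]
  ring

end Entropy

section GlobalInverse

variable [CompleteSpace E] [CompleteSpace F] {A : E → F}

theorem exists_hasDerivAt_ofBijective_symm_comp (hA : ContDiff ℝ 1 A) (hbij : Bijective A)
    (hD : ∀ w, Bijective (fderiv ℝ A w)) {c : ℝ → F} {c' : F} {t : ℝ} (hc : HasDerivAt c c' t) :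
    ∃ ξ, HasDerivAt (fun s => (Equiv.ofBijective A hbij).symm (c s)) ξ t ∧
      fderiv ℝ A ((Equiv.ofBijective A hbij).symm (c t)) ξ = c' := by
  set e := Equiv.ofBijective A hbij
  set w := e.symm (c t)
  set L := ContinuousLinearEquiv.ofBijective (fderiv ℝ A w)
    (LinearMap.ker_eq_bot.2 (hD w).1) (LinearMap.range_eq_top.2 (hD w).2)
  have hstrict : HasStrictFDerivAt A (L : E →L[ℝ] F) w := by
    rw [ContinuousLinearEquiv.coe_ofBijective]
    exact hA.contDiffAt.hasStrictFDerivAt one_ne_zero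
  -- `e.symm` agrees near `A w` with the local inverse given by the inverse function theorem
  have hinv : HasFDerivAt e.symm (L.symm : F →L[ℝ] E) (A w) :=
    hstrict.to_localInverse.hasFDerivAt.congr_of_eventuallyEq <| by
      filter_upwards [hstrict.eventually_right_inverse] with y hy
      exact (congrArg e.symm hy).symm.trans (e.symm_apply_apply _)
  rw [show A w = c t from e.apply_symm_apply _] at hinv
  exact ⟨L.symm c', hinv.comp_hasDerivAt t hc, L.apply_symm_apply c'⟩

end GlobalInverse

theorem relEntropy_pos [CompleteSpace E] [CompleteSpace F] {η : E → ℝ} {A G : E → F}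
    (hη : Differentiable ℝ η) (hA : ContDiff ℝ 1 A) (hG : Differentiable ℝ G)
    (hbij : Bijective A) (hD : ∀ w, Bijective (fderiv ℝ A w))
    (hH2 : ∀ w ξ, fderiv ℝ η w ξ = ⟪G w, fderiv ℝ A w ξ⟫)
    (hmono : ∀ w ξ, ξ ≠ 0 → 0 < ⟪fderiv ℝ G w ξ, fderiv ℝ A w ξ⟫) {u v : E} (huv : u ≠ v) :
    0 < relEntropy η A G u v := by
  -- on the segment from `A v` to `A u`, `η ∘ A⁻¹` has strictly increasing slope `⟪G ∘ A⁻¹, d⟫`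
  set e := Equiv.ofBijective A hbij
  set d := A u - A v
  have hd : d ≠ 0 := sub_ne_zero.2 (hbij.1.ne huv)
  set γ : ℝ → E := fun t => e.symm (A v + t • d)
  choose ξ hγ hDξ using fun t : ℝ =>
    exists_hasDerivAt_ofBijective_symm_comp hA hbij hD (hasDerivAt_add_smul (A v) d t)
  have hφ : ∀ t, HasDerivAt (fun t => η (γ t)) ⟪G (γ t), d⟫ t := fun t => by
    have h := (hη (γ t)).hasFDerivAt.comp_hasDerivAt t (hγ t)
    rwa [hH2, hDξ t] at h
  have hψ : ∀ t, HasDerivAt (fun t => ⟪G (γ t), d⟫) ⟪fderiv ℝ G (γ t) (ξ t), d⟫ t := fun t => by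
    simpa using ((hG (γ t)).hasFDerivAt.comp_hasDerivAt t (hγ t)).inner ℝ (hasDerivAt_const t d)
  have hpos : ∀ t, 0 < ⟪fderiv ℝ G (γ t) (ξ t), d⟫ := fun t => by
    have h := hmono (γ t) (ξ t) fun h => hd (by rw [← hDξ t, h, map_zero])
    rwa [hDξ t] at h
  have key := lt_sub_of_hasDerivAt_of_deriv_pos hφ hψ hpos
  have hγ0 : γ 0 = v := by simp [γ, e]
  have hγ1 : γ 1 = u := by simp [γ, e, d]
  rw [hγ0, hγ1] at key
  rw [relEntropy]
  linarith

section NearDiagonal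

variable {η : E → ℝ} {A G : E → F}

theorem half_mul_le_relEntropy_of_le_relEntropyHessian (hη : ContDiff ℝ 2 η)
    (hA : ContDiff ℝ 2 A) (hH2 : ∀ w ξ, fderiv ℝ η w ξ = ⟪G w, fderiv ℝ A w ξ⟫) {v ξ : E} {C : ℝ}
    (hC : ∀ t ∈ Icc (0 : ℝ) 1, C ≤ relEntropyHessian η A G (v + t • ξ) v ξ) :
    C / 2 ≤ relEntropy η A G (v + ξ) v := by
  have hφ : ∀ t, HasDerivAt (fun t => relEntropy η A G (v + t • ξ) v)
      (fderiv ℝ η (v + t • ξ) ξ - ⟪G v, fderiv ℝ A (v + t • ξ) ξ⟫) t := fun t =>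
    (((hasDerivAt_comp_add_smul (hη.differentiable two_ne_zero _)).sub_const (η v)).sub
      ((hasDerivAt_const t (G v)).inner ℝ
        ((hasDerivAt_comp_add_smul (hA.differentiable two_ne_zero _)).sub_const (A v)))).congr_deriv
      (by simp)
  have hψ : ∀ t, HasDerivAt (fun t => fderiv ℝ η (v + t • ξ) ξ - ⟪G v, fderiv ℝ A (v + t • ξ) ξ⟫)
      (relEntropyHessian η A G (v + t • ξ) v ξ) t := fun t =>
    ((hasDerivAt_fderiv_comp_add_smul hη ξ).sub
      ((hasDerivAt_const t (G v)).inner ℝ (hasDerivAt_fderiv_comp_add_smul hA ξ))).congr_deriv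
      (by simp [relEntropyHessian])
  simpa [hH2, relEntropy] using add_half_le_sub_of_le_deriv hφ hψ hC

theorem exists_mul_sq_le_relEntropy_of_norm_sub_le [ProperSpace E] (hη : ContDiff ℝ 2 η)
    (hA : ContDiff ℝ 2 A) (hG : Continuous G)
    (hH2 : ∀ w ξ, fderiv ℝ η w ξ = ⟪G w, fderiv ℝ A w ξ⟫)
    (hH3 : ∀ w ξ, ξ ≠ 0 → 0 < relEntropyHessian η A G w w ξ) (M : ℝ) :
    ∃ δ > 0, ∃ c > 0, ∀ u v, ‖v‖ ≤ M → ‖u - v‖ ≤ δ → c * ‖u - v‖ ^ 2 ≤ relEntropy η A G u v := by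
  -- by compactness, the Hessian stays positive on unit directions near the diagonal `w = v`
  set K : Set (E × E × E) :=
    (fun x : E × E => (x.1, x.1, x.2)) '' (Metric.closedBall 0 M ×ˢ Metric.sphere 0 1)
  have hK : IsCompact K :=
    ((isCompact_closedBall 0 M).prod (isCompact_sphere 0 1)).image (by fun_prop)
  obtain ⟨δ, hδ, c, hc, hbound⟩ := hK.exists_pos_le_of_dist_le
    (continuous_relEntropyHessian hη hA hG) <| by
      rintro _ ⟨⟨w, ζ⟩, ⟨-, hζ⟩, rfl⟩
      exact hH3 w ζ (ne_zero_of_mem_unit_sphere ⟨ζ, hζ⟩)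
  refine ⟨δ, hδ, c / 2, half_pos hc, fun u v hv huv => ?_⟩
  rcases eq_or_ne u v with rfl | hne
  · simp [relEntropy]
  set ξ := u - v
  have hξ : ‖ξ‖ ≠ 0 := norm_ne_zero_iff.2 (sub_ne_zero.2 hne)
  have hH : ∀ t ∈ Icc (0 : ℝ) 1, c * ‖ξ‖ ^ 2 ≤ relEntropyHessian η A G (v + t • ξ) v ξ := by
    intro t ht
    have hζ : ‖ξ‖⁻¹ • ξ ∈ Metric.sphere (0 : E) 1 := by simp [norm_smul, hξ]
    have hdist : dist (v + t • ξ, v, ‖ξ‖⁻¹ • ξ) (v, v, ‖ξ‖⁻¹ • ξ) ≤ δ := by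
      have ht' : dist (v + t • ξ) v = t * ‖ξ‖ := by
        rw [dist_eq_norm, add_sub_cancel_left, norm_smul, Real.norm_eq_abs, abs_of_nonneg ht.1]
      simp only [Prod.dist_eq, dist_self, ht']
      exact max_le (by nlinarith [norm_nonneg ξ, ht.2]) hδ.le
    have h := hbound _ ⟨(v, _), ⟨mem_closedBall_zero_iff.2 hv, hζ⟩, rfl⟩ _ hdist
    rw [relEntropyHessian_smul, inv_pow, ← div_eq_inv_mul, le_div_iff₀ (by positivity)] at h
    exact h
  simpa [ξ, mul_div_right_comm] using half_mul_le_relEntropy_of_le_relEntropyHessian hη hA hH2 hH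

end NearDiagonal

theorem exists_mul_sq_le_relEntropy [ProperSpace E] [CompleteSpace F] {η : E → ℝ} {A G : E → F}
    (hη : ContDiff ℝ 2 η) (hA : ContDiff ℝ 2 A) (hG : Differentiable ℝ G) (hbij : Bijective A)
    (hD : ∀ w, Bijective (fderiv ℝ A w)) (hH2 : ∀ w ξ, fderiv ℝ η w ξ = ⟪G w, fderiv ℝ A w ξ⟫)
    (hH3 : ∀ w ξ, ξ ≠ 0 → 0 < relEntropyHessian η A G w w ξ) (R M : ℝ) :
    ∃ c > 0, ∀ u v, ‖u‖ ≤ R → ‖v‖ ≤ M → c * ‖u - v‖ ^ 2 ≤ relEntropy η A G u v := by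
  obtain ⟨δ, hδ, c₁, hc₁, hnear⟩ :=
    exists_mul_sq_le_relEntropy_of_norm_sub_le hη hA hG.continuous hH2 hH3 M
  have hmono : ∀ w ξ, ξ ≠ 0 → 0 < ⟪fderiv ℝ G w ξ, fderiv ℝ A w ξ⟫ := fun w ξ hξ =>
    relEntropyHessian_self_eq_inner hη hA hG hH2 w ξ ▸ hH3 w ξ hξ
  have hcont : Continuous (uncurry (relEntropy η A G)) := by
    have := hη.continuous; have := hA.continuous; have := hG.continuous
    unfold relEntropy uncurry
    fun_prop
  obtain ⟨c₂, hc₂, hfar⟩ := exists_mul_sq_le_of_le_norm_sub hcont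
    (fun u v huv => relEntropy_pos (hη.differentiable two_ne_zero) (hA.of_le one_le_two) hG hbij hD
      hH2 hmono huv) R M hδ
  refine ⟨min c₁ c₂, lt_min hc₁ hc₂, fun u v hu hv => ?_⟩
  rcases le_total ‖u - v‖ δ with h | h
  · exact (mul_le_mul_of_nonneg_right (min_le_left _ _) (by positivity)).trans (hnear u v hv h)
  · exact (mul_le_mul_of_nonneg_right (min_le_right _ _) (by positivity)).trans (hfar u v hu hv h)

theorem relative_entropy_norm_like_lower_bound_general
    (n : ℕ) (p : ℝ) (hp : 1 < p)
    (A : EuclideanSpace ℝ (Fin n) → EuclideanSpace ℝ (Fin n))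
    (η : EuclideanSpace ℝ (Fin n) → ℝ)
    (G : EuclideanSpace ℝ (Fin n) → EuclideanSpace ℝ (Fin n))
    -- smoothness of the constitutive functions
    (hAreg : ContDiff ℝ 2 A)
    (hηreg : ContDiff ℝ (⊤ : ℕ∞) η)
    (hGreg : ContDiff ℝ (⊤ : ℕ∞) G)
    -- (H1): A is globally invertible with nonsingular differential
    (hH1 : Function.Bijective A)
    (hH1' : ∀ w, Function.Bijective (fderiv ℝ A w))
    -- (H2): entropy pair with multiplier G
    (hH2η : ∀ w ξ, fderiv ℝ η w ξ = ⟪G w, fderiv ℝ A w ξ⟫)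
    -- (H3): ∇²η(u) − G(u)·∇²A(u) is positive definite
    (hH3 : ∀ w (ξ : EuclideanSpace ℝ (Fin n)), ξ ≠ 0 →
      0 < iteratedFDeriv ℝ 2 η w ![ξ, ξ] - ⟪G w, iteratedFDeriv ℝ 2 A w ![ξ, ξ]⟫)
    -- (A1): growth of the entropy
    (β₁ β₂ B : ℝ) (hβ₁ : 0 < β₁)
    (hA1 : ∀ w : EuclideanSpace ℝ (Fin n),
      β₁ * (‖w‖ ^ p + 1) - B ≤ η w ∧ η w ≤ β₂ * (‖w‖ ^ p + 1))
    -- (A3): |A(u)|/η(u) = o(1) as |u| → ∞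
    (hA3 : ∀ ε > (0:ℝ), ∃ R₀, ∀ w : EuclideanSpace ℝ (Fin n),
      R₀ ≤ ‖w‖ → ‖A w‖ ≤ ε * η w)
    (M : ℝ) :
    ∃ R > M + 1, ∃ c₁ > (0:ℝ), ∃ c₂ > (0:ℝ),
      ∀ u ubar : EuclideanSpace ℝ (Fin n), ‖ubar‖ ≤ M →
        (‖u‖ ≤ R →
          c₁ * ‖u - ubar‖ ^ 2 ≤ η u - η ubar - ⟪G ubar, A u - A ubar⟫) ∧
        (R ≤ ‖u‖ →
          c₂ * ‖u - ubar‖ ^ p ≤ η u - η ubar - ⟪G ubar, A u - A ubar⟫) := by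
  obtain ⟨R₀, c₂, hc₂, hfar⟩ := exists_mul_rpow_le_relEntropy hηreg.continuous hAreg.continuous
    hGreg.continuous hp.le hβ₁ (fun w => (hA1 w).1) hA3 M
  have hH3' : ∀ w ξ, ξ ≠ 0 → 0 < relEntropyHessian η A G w w ξ := fun w ξ hξ => by
    simpa only [relEntropyHessian_self_eq_iteratedFDeriv] using hH3 w ξ hξ
  obtain ⟨c₁, hc₁, hnear⟩ := exists_mul_sq_le_relEntropy (hηreg.of_le (WithTop.coe_le_coe.2 le_top))
    hAreg (hGreg.differentiable (by simp)) hH1 hH1' hH2η hH3' (max R₀ (M + 2)) M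
  refine ⟨max R₀ (M + 2), by linarith [le_max_right R₀ (M + 2)], c₁, hc₁, c₂, hc₂,
    fun u ubar hubar => ⟨fun hu => hnear u ubar hu hubar,
      fun hu => hfar u ubar hubar ((le_max_left _ _).trans hu)⟩⟩

/-- **Lemma A.2 (norm-like lower bound for the relative entropy).**
Under hypotheses (H1), (H2), (H3) and the growth assumptions (A1), (A2), (A3),
one may select `R > M + 1` and constants `c₁, c₂ > 0` depending on `M` such that
`η(u|ū) ≥ c₁ |u − ū|²` for `|u| ≤ R`, `|ū| ≤ M`, and `η(u|ū) ≥ c₂ |u − ū|^p`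
for `|u| ≥ R`, `|ū| ≤ M`. -/
theorem relative_entropy_norm_like_lower_bound
    (n d : ℕ) (p : ℝ) (hp : 1 < p)
    (A : EuclideanSpace ℝ (Fin n) → EuclideanSpace ℝ (Fin n))
    (F : Fin d → EuclideanSpace ℝ (Fin n) → EuclideanSpace ℝ (Fin n))
    (η : EuclideanSpace ℝ (Fin n) → ℝ)
    (q : Fin d → EuclideanSpace ℝ (Fin n) → ℝ)
    (G : EuclideanSpace ℝ (Fin n) → EuclideanSpace ℝ (Fin n))
    -- smoothness of the constitutive functions
    (hAreg : ContDiff ℝ 2 A) (hFreg : ∀ α, ContDiff ℝ (⊤ : ℕ∞) (F α))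
    (hηreg : ContDiff ℝ (⊤ : ℕ∞) η) (hqreg : ∀ α, ContDiff ℝ (⊤ : ℕ∞) (q α))
    (hGreg : ContDiff ℝ (⊤ : ℕ∞) G)
    -- (H1): A is globally invertible with nonsingular differential
    (hH1 : Function.Bijective A)
    (hH1' : ∀ w, Function.Bijective (fderiv ℝ A w))
    -- (H2): entropy pair with multiplier G
    (hH2η : ∀ w ξ, fderiv ℝ η w ξ = ⟪G w, fderiv ℝ A w ξ⟫)
    (hH2q : ∀ α w ξ, fderiv ℝ (q α) w ξ = ⟪G w, fderiv ℝ (F α) w ξ⟫)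
    -- (H3): ∇²η(u) − G(u)·∇²A(u) is positive definite
    (hH3 : ∀ w (ξ : EuclideanSpace ℝ (Fin n)), ξ ≠ 0 →
      0 < iteratedFDeriv ℝ 2 η w ![ξ, ξ] - ⟪G w, iteratedFDeriv ℝ 2 A w ![ξ, ξ]⟫)
    -- (A1): growth of the entropy
    (β₁ β₂ B : ℝ) (hβ₁ : 0 < β₁) (hβ₂ : 0 < β₂) (hB : 0 < B)
    (hA1 : ∀ w : EuclideanSpace ℝ (Fin n),
      β₁ * (‖w‖ ^ p + 1) - B ≤ η w ∧ η w ≤ β₂ * (‖w‖ ^ p + 1))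
    -- (A2): |F_α(u)|/η(u) = o(1) as |u| → ∞
    (hA2 : ∀ α, ∀ ε > (0:ℝ), ∃ R₀, ∀ w : EuclideanSpace ℝ (Fin n),
      R₀ ≤ ‖w‖ → ‖F α w‖ ≤ ε * η w)
    -- (A3): |A(u)|/η(u) = o(1) as |u| → ∞
    (hA3 : ∀ ε > (0:ℝ), ∃ R₀, ∀ w : EuclideanSpace ℝ (Fin n),
      R₀ ≤ ‖w‖ → ‖A w‖ ≤ ε * η w)
    (M : ℝ) (hM : 0 < M) :
    ∃ R > M + 1, ∃ c₁ > (0:ℝ), ∃ c₂ > (0:ℝ),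
      ∀ u ubar : EuclideanSpace ℝ (Fin n), ‖ubar‖ ≤ M →
        (‖u‖ ≤ R →
          c₁ * ‖u - ubar‖ ^ 2 ≤ η u - η ubar - ⟪G ubar, A u - A ubar⟫) ∧
        (R ≤ ‖u‖ →
          c₂ * ‖u - ubar‖ ^ p ≤ η u - η ubar - ⟪G ubar, A u - A ubar⟫) :=
  relative_entropy_norm_like_lower_bound_general n p hp A η G hAreg hηreg hGreg hH1 hH1' hH2η hH3 β₁
    β₂ B hβ₁ hA1 hA3 M
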